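/- arXiv:1310.2275 — 3 statements merged into one kernel-verified Lean document; each statement's English description precedes it below -/
import Mathlib

section
/- Let n > 4. Define the sequence (α_k) by α_0 = 0 and α_{k+1} = (4(α_k + 1) - n + √(n(16 α_k^2 + 24 α_k + n + 8))) / (4(n - 1)). Then (α_k) is nonnegative, increasing, bounded above by 2/(n-4), and converges to 2/(n-4). -/
/-!
Write `f` for the recursion map and `a x = 4(n-2)x + (n-4)`. Then
`4(n-1)(f x - x) = √(n(16x²+24x+n+8)) - a x`, and the radicand exceeds `(a x)²` by
`8(n-1)(2-(n-4)x)(2x+1)`. Hence on `[0, 2/(n-4)]` the map `f` moves points up, and its only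
fixed point in `[0, ∞)` is `2/(n-4)`. Since `f` is also monotone on `[0, ∞)`, the orbit of `0`
increases inside `[0, 2/(n-4)]`, and its limit is a fixed point of `f`.
-/

open Filter Real Set

noncomputable def alphaMap (n x : ℝ) : ℝ :=
  (4 * (x + 1) - n + √(n * (16 * x ^ 2 + 24 * x + n + 8))) / (4 * (n - 1))

lemma alphaMap_radicand_sub_sq (n x : ℝ) :
    n * (16 * x ^ 2 + 24 * x + n + 8) - (4 * (n - 2) * x + (n - 4)) ^ 2
      = 8 * (n - 1) * (2 - (n - 4) * x) * (2 * x + 1) := by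
  ring

lemma alphaMap_sub_self {n : ℝ} (hn : n ≠ 1) (x : ℝ) :
    alphaMap n x - x
      = (√(n * (16 * x ^ 2 + 24 * x + n + 8)) - (4 * (n - 2) * x + (n - 4))) / (4 * (n - 1)) := by
  have : 4 * (n - 1) ≠ 0 := by intro h; apply hn; linarith
  unfold alphaMap
  field_simp
  ring

lemma self_le_alphaMap {n x : ℝ} (hn : 4 < n) (hx0 : 0 ≤ x) (hxL : x ≤ 2 / (n - 4)) :
    x ≤ alphaMap n x := by
  have hxL' : (n - 4) * x ≤ 2 := by rwa [le_div_iff₀' (by linarith)] at hxL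
  have ha : 4 * (n - 2) * x + (n - 4) ≤ √(n * (16 * x ^ 2 + 24 * x + n + 8)) := by
    rw [Real.le_sqrt (by nlinarith) (by nlinarith), ← sub_nonneg, alphaMap_radicand_sub_sq]
    have : 0 ≤ 8 * (n - 1) * (2 - (n - 4) * x) := mul_nonneg (by linarith) (by linarith)
    positivity
  rw [← sub_nonneg, alphaMap_sub_self (by linarith)]
  exact div_nonneg (by linarith) (by linarith)

lemma alphaMap_monotoneOn {n : ℝ} (hn : 1 < n) : MonotoneOn (alphaMap n) (Ici 0) := by
  intro x hx y hy hxy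
  rw [mem_Ici] at hx hy
  unfold alphaMap
  gcongr

lemma alphaMap_eq_self_iff {n x : ℝ} (hn : 4 < n) (hx : 0 ≤ x) :
    alphaMap n x = x ↔ x = 2 / (n - 4) := by
  have ha : 0 ≤ 4 * (n - 2) * x + (n - 4) := by nlinarith
  rw [← sub_eq_zero, alphaMap_sub_self (by linarith), div_eq_zero_iff, sub_eq_zero,
    Real.sqrt_eq_iff_eq_sq (by nlinarith) ha, ← sub_eq_zero, alphaMap_radicand_sub_sq,
    eq_div_iff (by linarith)]
  have h8 : 8 * (n - 1) ≠ 0 := by linarith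
  have h4 : 4 * (n - 1) ≠ 0 := by linarith
  have hx1 : 2 * x + 1 ≠ 0 := by linarith
  simp only [mul_eq_zero, h8, h4, hx1, false_or, or_false, sub_eq_zero]
  constructor <;> intro h <;> linarith

lemma isFixedPt_alphaMap {n : ℝ} (hn : 4 < n) :
    Function.IsFixedPt (alphaMap n) (2 / (n - 4)) :=
  (alphaMap_eq_self_iff hn (div_nonneg zero_le_two (by linarith))).2 rfl

lemma continuous_alphaMap (n : ℝ) : Continuous (alphaMap n) := by
  unfold alphaMap
  fun_prop

/-- The sequence α_k defined by α_0 = 0 and the stated recursion is nonnegative,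
increasing, bounded above by 2/(n-4), and converges to 2/(n-4), for n > 4. -/
theorem alpha_seq_props (n : ℝ) (hn : 4 < n) (α : ℕ → ℝ)
    (h0 : α 0 = 0)
    (hrec : ∀ k, α (k + 1) =
      (4 * (α k + 1) - n + Real.sqrt (n * (16 * (α k) ^ 2 + 24 * α k + n + 8))) / (4 * (n - 1))) :
    (∀ k, 0 ≤ α k) ∧ Monotone α ∧ (∀ k, α k ≤ 2 / (n - 4)) ∧
      Tendsto α atTop (nhds (2 / (n - 4))) := by
  set L := 2 / (n - 4)
  have hL : 0 ≤ L := div_nonneg zero_le_two (by linarith)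
  have hrec' : ∀ k, α (k + 1) = alphaMap n (α k) := hrec
  have hbounds : ∀ k, 0 ≤ α k ∧ α k ≤ L := by
    intro k
    induction k with
    | zero => exact ⟨h0.ge, h0 ▸ hL⟩
    | succ k ih =>
      rw [hrec']
      refine ⟨ih.1.trans (self_le_alphaMap hn ih.1 ih.2), ?_⟩
      calc alphaMap n (α k) ≤ alphaMap n L := alphaMap_monotoneOn (by linarith) ih.1 hL ih.2
        _ = L := isFixedPt_alphaMap hn
  have hmono : Monotone α := monotone_nat_of_le_succ fun k ↦
    hrec' k ▸ self_le_alphaMap hn (hbounds k).1 (hbounds k).2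
  have hbdd : BddAbove (range α) := ⟨L, by rintro _ ⟨k, rfl⟩; exact (hbounds k).2⟩
  have hlim := tendsto_atTop_ciSup hmono hbdd
  have hfix : alphaMap n (⨆ k, α k) = ⨆ k, α k := by
    refine tendsto_nhds_unique (((continuous_alphaMap n).tendsto _).comp hlim) ?_
    simpa [Function.comp_def, hrec'] using (tendsto_add_atTop_iff_nat 1).2 hlim
  have hsup : ⨆ k, α k = L :=
    (alphaMap_eq_self_iff hn ((hbounds 0).1.trans (le_ciSup hbdd 0))).1 hfix
  exact ⟨fun k ↦ (hbounds k).1, hmono, fun k ↦ (hbounds k).2, hsup ▸ hlim⟩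
end

section
/- Let n > 4, p > (n+4)/(n-4), and let 0 ≤ α_k ≤ α_{k+1} ≤ 2/(n-4) and 0 < β_k ≤ β_{k+1}. Define I³ := (4/n) α_{k+1} β_k (α_{k+1} + α_k + 1) + α_{k+1} β_{k+1} + β_{k+1} ((p+1)/2)((p+1)/2 - 3α_{k+1} - 1). Then β_{k+1} ((p+1)/2 - α_{k+1})^2 - I³ ≥ β_{k+1} ( ((n-4)/n) α_{k+1}^2 + (α_{k+1} + 1)((p-1)/2 - (4/n)(2/(n-4))) ) > 0. -/
/-! With `q = (p+1)/2`, the quadratic terms in `p` cancel and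
`β_{k+1}(q - α_{k+1})² - I³ = β_{k+1}(α_{k+1}² + (α_{k+1}+1)(p-1)/2 + 1) - (4/n) α_{k+1} β_k (α_{k+1}+α_k+1)`.
The negative term is controlled by `β_k ≤ β_{k+1}` and, for `c = 2/(n-4)`, by
`α_{k+1}(α_{k+1}+α_k+1) ≤ α_{k+1}² + c(α_{k+1}+1)`, which follows from `α_k, α_{k+1} ≤ c`.
Positivity of the bound reduces to `(4/n) c < (p-1)/2`, i.e. `p > 1 + 16/(n(n-4))`, which is weaker
than `p > (n+4)/(n-4) = 1 + 8/(n-4)` as soon as `n ≥ 2`. -/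

lemma mul_sq_sub_sub_I3_eq (n p a b β B : ℝ) :
    B * ((p + 1) / 2 - a) ^ 2 -
        ((4 / n) * a * β * (a + b + 1) + a * B + B * ((p + 1) / 2) * ((p + 1) / 2 - 3 * a - 1)) =
      B * (a ^ 2 + (a + 1) * ((p - 1) / 2) + 1) - (4 / n) * (a * β * (a + b + 1)) := by
  ring

lemma mul_add_add_one_le_sq_add {a b c : ℝ} (hb : 0 ≤ b) (hba : b ≤ a) (hac : a ≤ c) :
    a * (a + b + 1) ≤ a ^ 2 + c * (a + 1) := by
  nlinarith

lemma mul_le_I3_gap {n p a b c β B : ℝ} (hn : 0 < n) (hb : 0 ≤ b) (hba : b ≤ a) (hac : a ≤ c)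
    (hβ : 0 ≤ β) (hβB : β ≤ B) :
    B * ((n - 4) / n * a ^ 2 + (a + 1) * ((p - 1) / 2 - (4 / n) * c)) ≤
      B * (a ^ 2 + (a + 1) * ((p - 1) / 2) + 1) - (4 / n) * (a * β * (a + b + 1)) := by
  have ha : 0 ≤ a := hb.trans hba
  have hB : 0 ≤ B := hβ.trans hβB
  have key : a * β * (a + b + 1) ≤ B * (a ^ 2 + c * (a + 1)) :=
    calc a * β * (a + b + 1) = β * (a * (a + b + 1)) := by ring
      _ ≤ B * (a * (a + b + 1)) := by gcongr
      _ ≤ B * (a ^ 2 + c * (a + 1)) := by gcongr; exact mul_add_add_one_le_sq_add hb hba hac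
  have expand : B * ((n - 4) / n * a ^ 2 + (a + 1) * ((p - 1) / 2 - (4 / n) * c)) =
      B * (a ^ 2 + (a + 1) * ((p - 1) / 2)) - (4 / n) * (B * (a ^ 2 + c * (a + 1))) := by
    field_simp
    ring
  have := mul_le_mul_of_nonneg_left key (by positivity : (0 : ℝ) ≤ 4 / n)
  linarith

lemma four_div_mul_two_div_sub_four_lt {n p : ℝ} (hn : 4 < n) (hp : (n + 4) / (n - 4) < p) :
    4 / n * (2 / (n - 4)) < (p - 1) / 2 := by
  have h4 : 0 < n - 4 := by linarith
  rw [div_lt_iff₀ h4] at hp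
  rw [div_mul_div_comm, div_lt_div_iff₀ (by positivity) two_pos]
  nlinarith

/-- The key positivity of β_{k+1}((p+1)/2 - α_{k+1})² - I³ for the iteration. -/
theorem I3_upper_bound (n p αk αk1 βk βk1 : ℝ) (hn : 4 < n)
    (hp : p > (n + 4) / (n - 4))
    (hα0 : 0 ≤ αk) (hα1 : αk ≤ αk1) (hα2 : αk1 ≤ 2 / (n - 4))
    (hβ0 : 0 < βk) (hβ1 : βk ≤ βk1) :
    let I3 := (4 / n) * αk1 * βk * (αk1 + αk + 1) + αk1 * βk1 +
      βk1 * ((p + 1) / 2) * ((p + 1) / 2 - 3 * αk1 - 1)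
    βk1 * ((p + 1) / 2 - αk1) ^ 2 - I3 ≥
      βk1 * (((n - 4) / n) * αk1 ^ 2 + (αk1 + 1) * ((p - 1) / 2 - (4 / n) * (2 / (n - 4)))) ∧
    βk1 * (((n - 4) / n) * αk1 ^ 2 + (αk1 + 1) * ((p - 1) / 2 - (4 / n) * (2 / (n - 4)))) > 0 := by
  intro I3
  have hβk1 : 0 < βk1 := hβ0.trans_le hβ1
  have hαk1 : 0 ≤ αk1 := hα0.trans hα1
  refine ⟨?_, mul_pos hβk1 (add_pos_of_nonneg_of_pos ?_ (mul_pos ?_ (sub_pos.2 ?_)))⟩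
  · rw [ge_iff_le, mul_sq_sub_sub_I3_eq]
    exact mul_le_I3_gap (by linarith) hα0 hα1 hα2 hβ0.le hβ1
  · exact mul_nonneg (div_nonneg (by linarith) (by linarith)) (sq_nonneg _)
  · linarith
  · exact four_div_mul_two_div_sub_four_lt hn hp
end

section
/- Let u : ℝⁿ → ℝ be a positive C² function, ε > 0, α > 0, β > 0 real constants with p + 1 > 2α, a ≥ 0, and set w = Δu + α |∇u|²/(u+ε) + β |x|^{a/2} u^{(p+1)/2} and w̃ = (u+ε)^{-α} w. Suppose Δu ≤ 0 and w satisfies Δw - 2α(u+ε)^{-1} ∇u·∇w + α w (u+ε)^{-2}|∇u|² - (β(p+1)/2)|x|^{a/2} u^{(p-1)/2} w ≥ 0 on ℝⁿ. Then Δw̃ ≥ 0 at every point where w ≥ 0. -/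
/-!
Writing `f = (u + ε)^(-α)`, the product and chain rules give
`Δ(f w) = f · (Δw - 2α∇u·∇w/(u+ε) + α(α+1) w |∇u|²/(u+ε)² - α w Δu/(u+ε))`.
Subtracting the assumed differential inequality leaves
`(β(p+1)/2) |x|^{a/2} u^{(p-1)/2} w + α² w |∇u|²/(u+ε)² - α w Δu/(u+ε)`,
which is nonnegative where `w ≥ 0` because `p + 1 > 0` and `Δu ≤ 0`.

The weight `|x|^{a/2}` makes `w` only continuous at the origin, differentiable elsewhere. Where
`f w` has no second derivative its Laplacian is `0` by convention; where it has one, so does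
`w = (u + ε)^α (f w)`, the only delicate point being first-order differentiability at the origin,
which follows from continuity of the derivative there.
-/

open MeasureTheory RealInnerProductSpace

/-- The Laplacian of a function on Euclidean space. -/
noncomputable def laplacian {n : ℕ} (u : EuclideanSpace ℝ (Fin n) → ℝ)
    (x : EuclideanSpace ℝ (Fin n)) : ℝ :=
  ∑ i : Fin n, iteratedFDeriv ℝ 2 u x ![EuclideanSpace.single i 1, EuclideanSpace.single i 1]

open Filter Topology Set InnerProductSpace
open scoped Laplacian Gradient

section TwiceDifferentiable

variable {𝕜 : Type*} [NontriviallyNormedField 𝕜] {E F : Type*} [NormedAddCommGroup E]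
  [NormedSpace 𝕜 E] [NormedAddCommGroup F] [NormedSpace 𝕜 F]

variable (𝕜) in
/-- What the product and chain rules for second derivatives at `x` need; weaker than
`ContDiffAt 𝕜 2 f x`. -/
def TwiceDifferentiableAt (f : E → F) (x : E) : Prop :=
  (∀ᶠ y in 𝓝 x, DifferentiableAt 𝕜 f y) ∧ DifferentiableAt 𝕜 (fderiv 𝕜 f) x

theorem ContDiffAt.twiceDifferentiableAt {f : E → F} {x : E} (hf : ContDiffAt 𝕜 2 f x) :
    TwiceDifferentiableAt 𝕜 f x :=
  ⟨(hf.eventually (by simp)).mono fun _ hy => hy.differentiableAt (by simp),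
    (hf.fderiv_right (m := 1) le_rfl).differentiableAt (by simp)⟩

theorem TwiceDifferentiableAt.differentiableAt {f : E → F} {x : E}
    (hf : TwiceDifferentiableAt 𝕜 f x) : DifferentiableAt 𝕜 f x :=
  hf.1.self_of_nhds

theorem TwiceDifferentiableAt.fderiv_mul_eventuallyEq {f g : E → 𝕜} {x : E}
    (hf : TwiceDifferentiableAt 𝕜 f x) (hg : TwiceDifferentiableAt 𝕜 g x) :
    fderiv 𝕜 (fun y => f y * g y) =ᶠ[𝓝 x] fun y => f y • fderiv 𝕜 g y + g y • fderiv 𝕜 f y := by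
  filter_upwards [hf.1, hg.1] with y hfy hgy using fderiv_fun_mul hfy hgy

theorem TwiceDifferentiableAt.mul {f g : E → 𝕜} {x : E} (hf : TwiceDifferentiableAt 𝕜 f x)
    (hg : TwiceDifferentiableAt 𝕜 g x) : TwiceDifferentiableAt 𝕜 (fun y => f y * g y) x :=
  ⟨by filter_upwards [hf.1, hg.1] with y hfy hgy using hfy.mul hgy,
    ((hf.differentiableAt.smul hg.2).add (hg.differentiableAt.smul hf.2)).congr_of_eventuallyEq
      (hf.fderiv_mul_eventuallyEq hg)⟩

theorem TwiceDifferentiableAt.of_mul_left {f g : E → 𝕜} {x : E} (hf : ContDiffAt 𝕜 2 f x)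
    (hf0 : ∀ y, f y ≠ 0) (hfg : TwiceDifferentiableAt 𝕜 (fun y => f y * g y) x) :
    TwiceDifferentiableAt 𝕜 g x := by
  have hg : g = fun y => (f y)⁻¹ * (f y * g y) :=
    funext fun y => (inv_mul_cancel_left₀ (hf0 y) _).symm
  rw [hg]
  exact (hf.inv (hf0 x)).twiceDifferentiableAt.mul hfg

end TwiceDifferentiable

section RemovablePoint

variable {E F : Type*} [NormedAddCommGroup E] [NormedSpace ℝ E] [NormedAddCommGroup F]
  [NormedSpace ℝ F]

theorem norm_image_sub_sub_le_of_hasFDerivAt_Ico {f : E → F} {f' : E → E →L[ℝ] F} {x y : E}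
    {c : ℝ} (hf : Continuous f)
    (f_diff : ∀ s ∈ Ico (0 : ℝ) 1, HasFDerivAt f (f' (y + s • (x - y))) (y + s • (x - y)))
    (bound : ∀ s ∈ Ico (0 : ℝ) 1, ‖f' (y + s • (x - y)) - f' x‖ ≤ c) :
    ‖f y - f x - f' x (y - x)‖ ≤ c * ‖y - x‖ := by
  let z : ℝ → E := fun s => y + s • (x - y)
  have hmvt := norm_image_sub_le_of_norm_deriv_right_le_segment
    (f := fun s => f (z s) - s • f' x (x - y))
    (f' := fun s => f' (z s) (x - y) - f' x (x - y)) (C := c * ‖x - y‖)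
    (by fun_prop) (fun s hs => ?_) (fun s hs => ?_) 1 (right_mem_Icc.2 zero_le_one)
  · have hz0 : z 0 = y := by simp only [z, zero_smul, add_zero]
    have hz1 : z 1 = x := by simp only [z, one_smul, add_sub_cancel]
    rw [hz0, hz1, zero_smul, one_smul, sub_zero, sub_zero, mul_one] at hmvt
    have e : f y - f x - f' x (y - x) = -(f x - f' x (x - y) - f y) := by
      rw [← neg_sub x y, map_neg]
      abel
    rwa [e, norm_neg, ← norm_neg (y - x), neg_sub]
  · have hzd : HasDerivAt z (x - y) s := by
      have := ((hasDerivAt_id s).smul_const (x - y)).const_add y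
      rwa [one_smul] at this
    have := ((f_diff s hs).comp_hasDerivAt s hzd).sub ((hasDerivAt_id s).smul_const (f' x (x - y)))
    rw [one_smul] at this
    exact this.hasDerivWithinAt
  · rw [← sub_apply]
    exact (ContinuousLinearMap.le_opNorm _ _).trans (by gcongr; exact bound s hs)

theorem hasFDerivAt_of_hasFDerivAt_of_ne {f : E → F} {f' : E → E →L[ℝ] F} {x : E}
    (f_diff : ∀ y ≠ x, HasFDerivAt f (f' y) y) (hf : ContinuousAt f x)
    (hf' : ContinuousAt f' x) : HasFDerivAt f (f' x) x := by
  refine hasFDerivAt_iff_isLittleO.2 <| Asymptotics.isLittleO_iff.2 fun c hc => ?_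
  obtain ⟨δ, hδ, hclose⟩ := Metric.eventually_nhds_iff_ball.1
    (hf'.eventually (Metric.closedBall_mem_nhds (f' x) hc))
  filter_upwards [Metric.ball_mem_nhds x hδ] with y hy
  rcases eq_or_ne y x with rfl | hyx
  · simp
  have hcont : Continuous f := continuous_iff_continuousAt.2 fun z => by
    rcases eq_or_ne z x with rfl | hz
    exacts [hf, (f_diff z hz).continuousAt]
  have hz : ∀ s : ℝ, y + s • (x - y) - x = (1 - s) • (y - x) := fun s => by module
  refine norm_image_sub_sub_le_of_hasFDerivAt_Ico hcont (fun s hs => f_diff _ fun h => ?_)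
    (fun s hs => ?_)
  · rw [← sub_eq_zero, hz, smul_eq_zero] at h
    exact h.elim (fun h => by linarith [hs.2]) fun h => hyx (sub_eq_zero.1 h)
  · rw [← dist_eq_norm]
    refine hclose _ ?_
    rw [Metric.mem_ball, dist_eq_norm, hz, norm_smul, Real.norm_of_nonneg (by linarith [hs.2])]
    rw [Metric.mem_ball, dist_eq_norm] at hy
    nlinarith [hs.1, norm_nonneg (y - x)]

theorem TwiceDifferentiableAt.of_differentiableAt_fderiv {f : E → F} {x z : E}
    (hf : Continuous f) (hdiff : ∀ y ≠ z, DifferentiableAt ℝ f y)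
    (h : DifferentiableAt ℝ (fderiv ℝ f) x) : TwiceDifferentiableAt ℝ f x := by
  refine ⟨?_, h⟩
  rcases eq_or_ne x z with rfl | hxz
  · have hfx : DifferentiableAt ℝ f x := (hasFDerivAt_of_hasFDerivAt_of_ne
      (fun y hy => (hdiff y hy).hasFDerivAt) hf.continuousAt h.continuousAt).differentiableAt
    exact Eventually.of_forall fun y => (eq_or_ne y x).elim (· ▸ hfx) (hdiff y)
  · exact (eventually_ne_nhds hxz).mono hdiff

end RemovablePoint

section Laplacian

variable {E : Type*} [NormedAddCommGroup E] [InnerProductSpace ℝ E] [FiniteDimensional ℝ E]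
  {ι : Type*} [Fintype ι] {f g : E → ℝ} {x : E}

theorem laplacian_eq_sum_fderiv_fderiv (b : OrthonormalBasis ι ℝ E) (f : E → ℝ) (x : E) :
    Δ f x = ∑ i, fderiv ℝ (fderiv ℝ f) x (b i) (b i) := by
  simp [laplacian_eq_iteratedFDeriv_orthonormalBasis f b, iteratedFDeriv_two_apply]

theorem laplacian_eq_zero_of_not_differentiableAt_fderiv
    (hf : ¬DifferentiableAt ℝ (fderiv ℝ f) x) : Δ f x = 0 := by
  simp [laplacian_eq_sum_fderiv_fderiv (stdOrthonormalBasis ℝ E),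
    fderiv_zero_of_not_differentiableAt hf]

theorem inner_gradient_eq_sum (b : OrthonormalBasis ι ℝ E) (f g : E → ℝ) (x : E) :
    ⟪∇ f x, ∇ g x⟫ = ∑ i, fderiv ℝ f x (b i) * fderiv ℝ g x (b i) := by
  rw [← b.sum_inner_mul_inner]
  simp [real_inner_comm (b _)]

theorem norm_gradient_sq_eq_sum (b : OrthonormalBasis ι ℝ E) (f : E → ℝ) (x : E) :
    ‖∇ f x‖ ^ 2 = ∑ i, fderiv ℝ f x (b i) * fderiv ℝ f x (b i) := by
  rw [← real_inner_self_eq_norm_sq, inner_gradient_eq_sum b]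

theorem laplacian_mul (hf : TwiceDifferentiableAt ℝ f x) (hg : TwiceDifferentiableAt ℝ g x) :
    Δ (fun y => f y * g y) x = f x * Δ g x + 2 * ⟪∇ f x, ∇ g x⟫ + g x * Δ f x := by
  let b := stdOrthonormalBasis ℝ E
  have hd : HasFDerivAt (fun y => f y • fderiv ℝ g y + g y • fderiv ℝ f y) _ x :=
    (hf.differentiableAt.hasFDerivAt.smul hg.2.hasFDerivAt).add
      (hg.differentiableAt.hasFDerivAt.smul hf.2.hasFDerivAt)
  simp only [laplacian_eq_sum_fderiv_fderiv b, inner_gradient_eq_sum b,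
    (hf.fderiv_mul_eventuallyEq hg).fderiv_eq, hd.fderiv, Finset.mul_sum, ← Finset.sum_add_distrib]
  refine Finset.sum_congr rfl fun i _ => ?_
  simp only [add_apply, smul_apply, ContinuousLinearMap.smulRight_apply, smul_eq_mul]
  ring

theorem gradient_comp {φ : ℝ → ℝ} {φ' : ℝ} (hφ : HasDerivAt φ φ' (f x))
    (hf : DifferentiableAt ℝ f x) : ∇ (fun y => φ (f y)) x = φ' • ∇ f x := by
  have : HasFDerivAt (fun y => φ (f y)) _ x := hφ.comp_hasFDerivAt x hf.hasFDerivAt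
  rw [gradient, this.fderiv, map_smul, gradient]

theorem laplacian_comp {φ φ' : ℝ → ℝ} {φ'' : ℝ} (hφ : ∀ᶠ t in 𝓝 (f x), HasDerivAt φ (φ' t) t)
    (hφ' : HasDerivAt φ' φ'' (f x)) (hf : TwiceDifferentiableAt ℝ f x) :
    Δ (fun y => φ (f y)) x = φ' (f x) * Δ f x + φ'' * ‖∇ f x‖ ^ 2 := by
  let b := stdOrthonormalBasis ℝ E
  have hev : fderiv ℝ (fun y => φ (f y)) =ᶠ[𝓝 x] fun y => φ' (f y) • fderiv ℝ f y := by
    filter_upwards [hf.1, hf.differentiableAt.continuousAt.eventually hφ] with y hfy hφy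
    exact (hφy.comp_hasFDerivAt y hfy.hasFDerivAt).fderiv
  have hd : HasFDerivAt (fun y => φ' (f y) • fderiv ℝ f y) _ x :=
    (hφ'.comp_hasFDerivAt x hf.differentiableAt.hasFDerivAt).smul hf.2.hasFDerivAt
  simp only [laplacian_eq_sum_fderiv_fderiv b, norm_gradient_sq_eq_sum b, hev.fderiv_eq,
    hd.fderiv, Finset.mul_sum, ← Finset.sum_add_distrib]
  refine Finset.sum_congr rfl fun i _ => ?_
  simp only [Function.comp_apply, add_apply, smul_apply, ContinuousLinearMap.smulRight_apply,
    smul_eq_mul]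
  ring

theorem ContDiff.laplacian {n : WithTop ℕ∞} (hf : ContDiff ℝ (n + 2) f) : ContDiff ℝ n (Δ f) := by
  rw [laplacian_eq_iteratedFDeriv_stdOrthonormalBasis]
  exact ContDiff.sum fun i _ => (ContinuousMultilinearMap.apply ℝ (fun _ : Fin 2 => E) ℝ
    ![stdOrthonormalBasis ℝ E i, stdOrthonormalBasis ℝ E i]).contDiff.comp
    (hf.iteratedFDeriv_right (by rfl))

theorem ContDiff.gradient {n : WithTop ℕ∞} (hf : ContDiff ℝ (n + 1) f) : ContDiff ℝ n (∇ f) :=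
  (toDual ℝ E).symm.contDiff.comp (hf.fderiv_right le_rfl)

theorem continuous_and_differentiableAt_of_ne_zero {u w : E → ℝ} {ε α β b q : ℝ}
    (hu : ContDiff ℝ 3 u) (hu_pos : ∀ y, 0 < u y) (hε : 0 ≤ ε) (hb : 0 ≤ b)
    (hw : ∀ y, w y = Δ u y + α * ‖∇ u y‖ ^ 2 / (u y + ε) + β * ‖y‖ ^ b * u y ^ q) :
    Continuous w ∧ ∀ y ≠ 0, DifferentiableAt ℝ w y := by
  have hΔ : ContDiff ℝ 1 (Δ u) := hu.laplacian
  have hgrad : ContDiff ℝ 1 (∇ u) := ContDiff.gradient (hu.of_le (by norm_num))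
  have hu1 : ContDiff ℝ 1 u := hu.of_le (by norm_num)
  have hden : ∀ y, u y + ε ≠ 0 := fun y => by linarith [hu_pos y]
  have hsmooth : ContDiff ℝ 1 fun y => Δ u y + α * ‖∇ u y‖ ^ 2 / (u y + ε) :=
    hΔ.add ((contDiff_const.mul (hgrad.norm_sq ℝ)).div (hu1.add contDiff_const) hden)
  have hpow : ContDiff ℝ 1 fun y => u y ^ q := hu1.rpow_const_of_ne fun y => (hu_pos y).ne'
  rw [funext hw]
  refine ⟨hsmooth.continuous.add ((continuous_const.mul
    ((Real.continuous_rpow_const hb).comp continuous_norm)).mul hpow.continuous), fun y hy => ?_⟩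
  exact (hsmooth.differentiable one_ne_zero y).add (((differentiableAt_const _).mul
    ((differentiableAt_id.norm ℝ hy).rpow_const (Or.inl (norm_ne_zero_iff.2 hy)))).mul
    (hpow.differentiable one_ne_zero y))

theorem laplacian_rpow_add_mul {u w : E → ℝ} {c α : ℝ} (hu : ContDiffAt ℝ 2 u x)
    (hw : TwiceDifferentiableAt ℝ w x) (hc : 0 < u x + c) :
    Δ (fun y => (u y + c) ^ (-α) * w y) x = (u x + c) ^ (-α) * (Δ w x
      - 2 * α * (u x + c)⁻¹ * ⟪∇ u x, ∇ w x⟫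
      + α * (α + 1) * w x * ((u x + c) ^ 2)⁻¹ * ‖∇ u x‖ ^ 2
      - α * w x * (u x + c)⁻¹ * Δ u x) := by
  have hφ : ∀ t, 0 < t + c →
      HasDerivAt (fun s => (s + c) ^ (-α)) (-α * (t + c) ^ (-α - 1)) t := fun t ht => by
    simpa using ((hasDerivAt_id t).add_const c).rpow_const (p := -α) (Or.inl ht.ne')
  have hφ' : HasDerivAt (fun s => -α * (s + c) ^ (-α - 1))
      (-α * ((-α - 1) * (u x + c) ^ (-α - 1 - 1))) (u x) := by
    simpa using (((hasDerivAt_id (u x)).add_const c).rpow_const (p := -α - 1)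
      (Or.inl hc.ne')).const_mul (-α)
  have hev : ∀ᶠ t in 𝓝 (u x), HasDerivAt (fun s => (s + c) ^ (-α)) (-α * (t + c) ^ (-α - 1)) t :=
    (eventually_gt_nhds (by linarith : -c < u x)).mono fun t ht => hφ t (by linarith)
  have hf : ContDiffAt ℝ 2 (fun y => (u y + c) ^ (-α)) x :=
    (hu.add contDiffAt_const).rpow_const_of_ne hc.ne'
  rw [laplacian_mul hf.twiceDifferentiableAt hw,
    gradient_comp (hφ _ hc) (hu.differentiableAt (by simp)),
    laplacian_comp hev hφ' hu.twiceDifferentiableAt, real_inner_smul_left,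
    show -α - 1 - 1 = -α - 2 by ring, Real.rpow_sub_one hc.ne',
    show (2 : ℝ) = (2 : ℕ) by rfl, Real.rpow_sub_natCast hc.ne']
  field_simp
  ring

end Laplacian

theorem laplacian_eq_innerProductSpace_laplacian {n : ℕ} (f : EuclideanSpace ℝ (Fin n) → ℝ) :
    laplacian f = Δ f := by
  ext x
  simp [laplacian,
    laplacian_eq_iteratedFDeriv_orthonormalBasis f (EuclideanSpace.basisFun (Fin n) ℝ)]

/-- Maximum-principle step: if u > 0 is superharmonic, p + 1 > 2α, and
w = Δu + α|∇u|²/(u+ε) + β|x|^{a/2} u^{(p+1)/2} satisfies the stated differential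
inequality, then w̃ = (u+ε)^{-α} w is subharmonic on the set {w ≥ 0}. -/
theorem subharmonic_on_nonneg_set (n : ℕ) (p a ε α β : ℝ)
    (hε : 0 < ε) (hα : 0 < α) (hβ : 0 < β) (ha : 0 ≤ a) (hpα : p + 1 > 2 * α)
    (u w : EuclideanSpace ℝ (Fin n) → ℝ) (hu : ContDiff ℝ 4 u)
    (hupos : ∀ x, 0 < u x)
    (hsuper : ∀ x, laplacian u x ≤ 0)
    (hw : ∀ x, w x = laplacian u x + α * ‖gradient u x‖ ^ 2 / (u x + ε) +
      β * ‖x‖ ^ (a / 2) * u x ^ ((p + 1) / 2))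
    (hineq : ∀ x, laplacian w x
        - 2 * α * (u x + ε)⁻¹ * ⟪gradient u x, gradient w x⟫
        + α * w x * ((u x + ε) ^ 2)⁻¹ * ‖gradient u x‖ ^ 2
        - (β * (p + 1) / 2) * ‖x‖ ^ (a / 2) * u x ^ ((p - 1) / 2) * w x ≥ 0) :
    ∀ x, 0 ≤ w x → 0 ≤ laplacian (fun y => (u y + ε) ^ (-α) * w y) x := by
  intro x hwx
  simp only [laplacian_eq_innerProductSpace_laplacian] at hsuper hw hineq ⊢
  have hV : ∀ y, 0 < u y + ε := fun y => by linarith [hupos y]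
  have hf : ContDiff ℝ 2 fun y => (u y + ε) ^ (-α) :=
    ((hu.of_le (by norm_num)).add contDiff_const).rpow_const_of_ne fun y => (hV y).ne'
  by_cases hg : DifferentiableAt ℝ (fderiv ℝ fun y => (u y + ε) ^ (-α) * w y) x
  swap
  · rw [laplacian_eq_zero_of_not_differentiableAt_fderiv hg]
  obtain ⟨hw_cont, hw_diff⟩ := continuous_and_differentiableAt_of_ne_zero
    (hu.of_le (by norm_num)) hupos hε.le (by positivity) hw
  have hw2 : TwiceDifferentiableAt ℝ w x :=
    (TwiceDifferentiableAt.of_differentiableAt_fderiv (hf.continuous.mul hw_cont)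
      (fun y hy => (hf.differentiable two_ne_zero y).mul (hw_diff y hy)) hg).of_mul_left
      hf.contDiffAt fun y => (Real.rpow_pos_of_pos (hV y) _).ne'
  rw [laplacian_rpow_add_mul (hu.of_le (by norm_num)).contDiffAt hw2 (hV x)]
  refine mul_nonneg (Real.rpow_nonneg (hV x).le _) ?_
  have hsource : 0 ≤ β * (p + 1) / 2 * ‖x‖ ^ (a / 2) * u x ^ ((p - 1) / 2) * w x := by
    have hp : 0 ≤ β * (p + 1) / 2 := by nlinarith
    have := hupos x
    positivity
  have hgrad_sq : 0 ≤ α ^ 2 * w x * ((u x + ε) ^ 2)⁻¹ * ‖∇ u x‖ ^ 2 := by positivity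
  have hsuper_x : 0 ≤ α * w x * (u x + ε)⁻¹ * -Δ u x :=
    mul_nonneg (by have := hV x; positivity) (by linarith [hsuper x])
  linarith [hineq x]
end
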